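/- Let g : ℝ → ℝ be twice differentiable and let y be three times differentiable on an open interval I ⊆ ℝ with y'(x) ≠ 0 and (y'(x))² = g(y(x)) for all x ∈ I. Then for every x ∈ I one has y''(x) = (1/2)·g'(y(x)) and (y''(x)/(2y'(x)))² − (d/dx)(y''(x)/(2y'(x))) = (3/(16·g(y(x))))·(g'(y(x)))² − (1/4)·g''(y(x)). -/

import Mathlib

/-!
Differentiating `(y')² = g ∘ y` and cancelling `y' ≠ 0` gives `y'' = g'(y)/2` on `I`; differentiating
once more gives `y''' = g''(y) y'/2`. For any `u, v` with `v' = u`, the quotient rule gives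
`(u/(2v))² − (u/(2v))' = (3/4)(u/v)² − u'/(2v)`; taking `v = y'`, `u = y''` and substituting
`(y')² = g(y)` yields the formula.
-/

open Filter Topology

theorem deriv_deriv_eq_of_sq_deriv_eventuallyEq {g y : ℝ → ℝ} {x : ℝ}
    (hsq : (fun t => deriv y t ^ 2) =ᶠ[𝓝 x] fun t => g (y t))
    (hg : DifferentiableAt ℝ g (y x)) (hy' : DifferentiableAt ℝ (deriv y) x)
    (hy0 : deriv y x ≠ 0) :
    deriv (deriv y) x = 1 / 2 * deriv g (y x) := by
  have hy : DifferentiableAt ℝ y x := differentiableAt_of_deriv_ne_zero hy0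
  have hlhs : HasDerivAt (fun t => deriv y t ^ 2) (2 * deriv y x * deriv (deriv y) x) x := by
    simpa using hy'.hasDerivAt.fun_pow 2
  have hrhs : HasDerivAt (fun t => g (y t)) (deriv g (y x) * deriv y x) x :=
    hg.hasDerivAt.comp x hy.hasDerivAt
  have hchain := (hlhs.congr_of_eventuallyEq hsq.symm).unique hrhs
  have := mul_right_cancel₀ hy0
    (by linear_combination hchain : 2 * deriv (deriv y) x * deriv y x = deriv g (y x) * deriv y x)
  linarith

theorem sq_sub_deriv_half_div {u v : ℝ → ℝ} {x u' : ℝ}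
    (hv : HasDerivAt v (u x) x) (hu : HasDerivAt u u' x) (hv0 : v x ≠ 0) :
    (u x / (2 * v x)) ^ 2 - deriv (fun t => u t / (2 * v t)) x
      = 3 / 4 * (u x / v x) ^ 2 - u' / (2 * v x) := by
  have hquot : HasDerivAt (fun t => u t / (2 * v t))
      ((u' * (2 * v x) - u x * (2 * u x)) / (2 * v x) ^ 2) x :=
    hu.div (hv.const_mul 2) (mul_ne_zero two_ne_zero hv0)
  rw [hquot.deriv]
  field_simp
  ring

theorem stmt_0 (g y : ℝ → ℝ) (I : Set ℝ) (hI : IsOpen I)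
    (hg : Differentiable ℝ g) (hg' : Differentiable ℝ (deriv g))
    (hy' : ∀ x ∈ I, DifferentiableAt ℝ (deriv y) x)
    (hy0 : ∀ x ∈ I, deriv y x ≠ 0)
    (heq : ∀ x ∈ I, (deriv y x) ^ 2 = g (y x)) :
    ∀ x ∈ I,
      deriv (deriv y) x = (1 / 2) * deriv g (y x) ∧
      (deriv (deriv y) x / (2 * deriv y x)) ^ 2
          - deriv (fun t => deriv (deriv y) t / (2 * deriv y t)) x
        = (3 / (16 * g (y x))) * (deriv g (y x)) ^ 2
            - (1 / 4) * deriv (deriv g) (y x) := by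
  have hy'' : ∀ x ∈ I, deriv (deriv y) x = 1 / 2 * deriv g (y x) := fun x hx =>
    deriv_deriv_eq_of_sq_deriv_eventuallyEq (eventually_of_mem (hI.mem_nhds hx) heq) (hg _)
      (hy' x hx) (hy0 x hx)
  intro x hx
  refine ⟨hy'' x hx, ?_⟩
  have hy : DifferentiableAt ℝ y x := differentiableAt_of_deriv_ne_zero (hy0 x hx)
  have hy''' : HasDerivAt (deriv (deriv y)) (1 / 2 * (deriv (deriv g) (y x) * deriv y x)) x :=
    (((hg' _).hasDerivAt.comp x hy.hasDerivAt).const_mul (1 / 2)).congr_of_eventuallyEq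
      (eventually_of_mem (hI.mem_nhds hx) hy'')
  have hy0x := hy0 x hx
  rw [sq_sub_deriv_half_div (hy' x hx).hasDerivAt hy''' hy0x, hy'' x hx, ← heq x hx]
  field_simp
  ring
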